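/- arXiv:2102.10368 — 4 statements merged into one kernel-verified Lean document; each statement's English description precedes it below -/
import Mathlib

section
/- Local independence is not symmetric: there exists a finite team T over two variables x, y and an assignment s ∈ T such that Ind_x(y) holds at s but Ind_y(x) does not hold at s. -/
/-- Local independence is not symmetric: over variables `0 = x` and `1 = y`
there is a finite team and an assignment where `Ind_x(y)` holds but `Ind_y(x)` fails. -/
theorem local_independence_not_symmetric :
    ∃ (T : Set (Fin 2 → ℕ)) (s : Fin 2 → ℕ), T.Finite ∧ s ∈ T ∧
      (∀ t ∈ T, ∃ u ∈ T, u 0 = s 0 ∧ u 1 = t 1) ∧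
      ¬ (∀ t ∈ T, ∃ u ∈ T, u 1 = s 1 ∧ u 0 = t 0) := by
  refine ⟨{![0,0], ![0,1], ![1,1]}, ![0,0], ?_, ?_, ?_, ?_⟩
  · exact (Set.finite_singleton _).insert _ |>.insert _
  · simp
  · rintro t (rfl | rfl | rfl)
    · exact ⟨![0,0], by simp, by simp⟩
    · exact ⟨![0,1], by simp, by simp⟩
    · exact ⟨![0,1], by simp, by simp⟩
  · intro h
    obtain ⟨u, hu, h1, h0⟩ := h ![1,1] (by simp)
    rcases hu with rfl | rfl | rfl <;> simp_all
end

section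
/- Let T be a team over variables (x, y, z, v) with values in a set M, satisfying: (dep) for all s, t ∈ T, s(x) = t(x) implies s(y) = t(y); and the six copy inclusions ϑ₀: (∀s∈T)(∃t∈T) t(x)=s(x) ∧ t(z)=s(x); ϑ₁: (∀s∈T)(∃t∈T) t(y)=s(y) ∧ t(v)=s(v) ∧ t(z)=s(y); ϑ₂: (∀s∈T)(∃t∈T) t(x)=s(x) ∧ t(z)=s(z) ∧ t(v)=s(x); ϑ₃: (∀s∈T)(∃t∈T) t(y)=s(y) ∧ t(z)=s(z) ∧ t(v)=s(y); ϑ₄: (∀s∈T)(∃t∈T) t(z)=s(z) ∧ t(v)=s(v) ∧ t(x)=s(z); ϑ₅: (∀s∈T)(∃t∈T) t(z)=s(z) ∧ t(v)=s(v) ∧ t(x)=s(v). Fix s₀ ∈ T, let f be a function on T(x) with t(y) = f(t(x)) for all t ∈ T (which exists by (dep), noting T(y) ⊆ T(x)), and let a_i := f^i(s₀(x)). Then for all i, j ∈ ℕ there exists t ∈ T with t(x) = a_i and t(z) = a_j. -/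
/-- Variables are encoded as `0 = x`, `1 = y`, `2 = z`, `3 = v`.
The copy rules ϑ₀–ϑ₅ together with global dependence of `y` on `x`
enforce a cartesian product of the iterates of `f` inside `T(x,z)`. -/
theorem copy_rules_enforce_product
    {M : Type*} (T : Set (Fin 4 → M))
    (hdep : ∀ s ∈ T, ∀ t ∈ T, s 0 = t 0 → s 1 = t 1)
    (hθ0 : ∀ s ∈ T, ∃ t ∈ T, t 0 = s 0 ∧ t 2 = s 0)
    (hθ1 : ∀ s ∈ T, ∃ t ∈ T, t 1 = s 1 ∧ t 3 = s 3 ∧ t 2 = s 1)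
    (hθ2 : ∀ s ∈ T, ∃ t ∈ T, t 0 = s 0 ∧ t 2 = s 2 ∧ t 3 = s 0)
    (hθ3 : ∀ s ∈ T, ∃ t ∈ T, t 1 = s 1 ∧ t 2 = s 2 ∧ t 3 = s 1)
    (hθ4 : ∀ s ∈ T, ∃ t ∈ T, t 2 = s 2 ∧ t 3 = s 3 ∧ t 0 = s 2)
    (hθ5 : ∀ s ∈ T, ∃ t ∈ T, t 2 = s 2 ∧ t 3 = s 3 ∧ t 0 = s 3)
    (s₀ : Fin 4 → M) (hs₀ : s₀ ∈ T)
    (f : M → M) (hf : ∀ t ∈ T, t 1 = f (t 0)) :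
    ∀ i j : ℕ, ∃ t ∈ T, t 0 = f^[i] (s₀ 0) ∧ t 2 = f^[j] (s₀ 0) := by
  have step_i : ∀ t ∈ T, ∃ t' ∈ T, t' 0 = f (t 0) ∧ t' 2 = t 2 := by
    intro t ht
    obtain ⟨u, hu, hu1, hu2, hu3⟩ := hθ3 t ht
    obtain ⟨q, hq, hq2, hq3, hq0⟩ := hθ5 u hu
    exact ⟨q, hq, (hq0.trans hu3).trans (hf t ht), by rw [hq2, hu2]⟩
  have step_j : ∀ t ∈ T, ∃ t' ∈ T, t' 0 = t 0 ∧ t' 2 = f (t 2) := by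
    intro t ht
    obtain ⟨u, hu, hu0, hu2, hu3⟩ := hθ2 t ht
    obtain ⟨r, hr, hr2, hr3, hr0⟩ := hθ4 u hu
    obtain ⟨w, hw, hw1, hw3, hw2⟩ := hθ1 r hr
    obtain ⟨q, hq, hq2, hq3, hq0⟩ := hθ5 w hw
    refine ⟨q, hq, by rw [hq0, hw3, hr3, hu3], ?_⟩
    rw [hq2, hw2, hf r hr, hr0, hu2]
  intro i j
  induction j with
  | zero =>
    induction i with
    | zero =>
      obtain ⟨t, ht, h0, h2⟩ := hθ0 s₀ hs₀
      exact ⟨t, ht, h0, h2⟩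
    | succ i ih =>
      obtain ⟨t, ht, h0, h2⟩ := ih
      obtain ⟨t', ht', h0', h2'⟩ := step_i t ht
      exact ⟨t', ht', by rw [h0', h0, Function.iterate_succ_apply'],
        by rw [h2', h2]⟩
  | succ j ih =>
    obtain ⟨t, ht, h0, h2⟩ := ih
    obtain ⟨t', ht', h0', h2'⟩ := step_j t ht
    exact ⟨t', ht', by rw [h0', h0],
      by rw [h2', h2, Function.iterate_succ_apply']⟩
end

section
/- Bisimilarity implies LFD-equivalence: let (M, T) and (N, T') be dependence models of the same type and Z ⊆ T × T' an LFD-bisimulation. Then for every pair (s, s') ∈ Z and every LFD-formula φ, (M, T) ⊨_s φ if and only if (N, T') ⊨_{s'} φ. -/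
/-- A relational vocabulary: relation symbols with arities. -/
structure Voc where
  Rel : Type
  ar : Rel → ℕ

/-- Syntax of LFD: relational atoms, dependence atoms, negation, conjunction,
and the dependence modality `□_X`. -/
inductive LFDFml (σ : Voc) (V : Type) : Type where
  | rel : (r : σ.Rel) → (Fin (σ.ar r) → V) → LFDFml σ V
  | dep : Finset V → V → LFDFml σ V
  | neg : LFDFml σ V → LFDFml σ V
  | and : LFDFml σ V → LFDFml σ V → LFDFml σ V
  | box : Finset V → LFDFml σ V → LFDFml σ V

/-- A dependence model: a relational structure together with a nonempty team. -/
structure DepModel (σ : Voc) (V : Type) where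
  M : Type
  interp : (r : σ.Rel) → (Fin (σ.ar r) → M) → Prop
  T : Set (V → M)
  nonempty : T.Nonempty

/-- Local satisfaction of LFD formulas at an assignment. -/
def DepModel.sat {σ : Voc} {V : Type} (𝔐 : DepModel σ V) :
    (V → 𝔐.M) → LFDFml σ V → Prop
  | s, .rel r x => 𝔐.interp r (fun i => s (x i))
  | s, .dep X y => ∀ t ∈ 𝔐.T, (∀ x ∈ X, t x = s x) → t y = s y
  | s, .neg φ => ¬ 𝔐.sat s φ
  | s, .and φ ψ => 𝔐.sat s φ ∧ 𝔐.sat s ψ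
  | s, .box X φ => ∀ t ∈ 𝔐.T, (∀ x ∈ X, t x = s x) → 𝔐.sat t φ

/-- Bisimilar assignments satisfy the same LFD formulas. -/
theorem lfd_bisimulation_implies_equivalence {σ : Voc} {V : Type}
    (𝔐 𝔑 : DepModel σ V) (Z : (V → 𝔐.M) → (V → 𝔑.M) → Prop)
    (hsub : ∀ s s', Z s s' → s ∈ 𝔐.T ∧ s' ∈ 𝔑.T)
    (hrel : ∀ s s', Z s s' → ∀ (r : σ.Rel) (x : Fin (σ.ar r) → V),
      (𝔐.sat s (.rel r x) ↔ 𝔑.sat s' (.rel r x)))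
    (hdep : ∀ s s', Z s s' → ∀ (X : Finset V) (y : V),
      (𝔐.sat s (.dep X y) ↔ 𝔑.sat s' (.dep X y)))
    (hback : ∀ s s', Z s s' → ∀ t' ∈ 𝔑.T, ∀ X : Finset V,
      (∀ x ∈ X, t' x = s' x) → ∃ t ∈ 𝔐.T, Z t t' ∧ ∀ x ∈ X, t x = s x)
    (hforth : ∀ s s', Z s s' → ∀ t ∈ 𝔐.T, ∀ X : Finset V,
      (∀ x ∈ X, t x = s x) → ∃ t' ∈ 𝔑.T, Z t t' ∧ ∀ x ∈ X, t' x = s' x) :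
    ∀ (φ : LFDFml σ V) (s : V → 𝔐.M) (s' : V → 𝔑.M), Z s s' →
      (𝔐.sat s φ ↔ 𝔑.sat s' φ) := by
  intro φ
  induction φ with
  | rel r x => intro s s' hZ; exact hrel s s' hZ r x
  | dep X y => intro s s' hZ; exact hdep s s' hZ X y
  | neg φ ih => intro s s' hZ; exact not_congr (ih s s' hZ)
  | and φ ψ ih1 ih2 => intro s s' hZ; exact and_congr (ih1 s s' hZ) (ih2 s s' hZ)
  | box X φ ih =>
    intro s s' hZ
    constructor
    · intro h t' ht' hX
      obtain ⟨t, ht, hZt, htX⟩ := hback s s' hZ t' ht' X hX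
      exact (ih t t' hZt).mp (h t ht htX)
    · intro h t ht hX
      obtain ⟨t', ht', hZt, htX⟩ := hforth s s' hZ t ht X hX
      exact (ih t t' hZt).mpr (h t' ht' htX)
end

section
/- There exist two teams over variables {x, y} (over ℕ, with empty vocabulary) and a relation Z between them that is a full LFD⁼-bisimulation (i.e., a bisimulation for the logic with atoms D, Υ, =, ≠ whose projections cover both teams), such that the first team satisfies T(x) ⊆ T(y) while the second does not. Concretely, T = {(0,1),(1,0)} and T' = {(1,2),(2,0)} (assignments written as value pairs for (x,y)) with Z relating (0,1)↔(1,2) and (1,0)↔(2,0) form such an example. -/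
/-- Local dependence atom `D_X y'` for a team over variables `Fin 2` (0 = x, 1 = y). -/
def locD (T : Set (Fin 2 → ℕ)) (X : Finset (Fin 2)) (y' : Fin 2) (s : Fin 2 → ℕ) : Prop :=
  ∀ t ∈ T, (∀ v ∈ X, t v = s v) → t y' = s y'

/-- Local anonymity atom `Υ_X y'` for a team over variables `Fin 2`. -/
def locU (T : Set (Fin 2 → ℕ)) (X : Finset (Fin 2)) (y' : Fin 2) (s : Fin 2 → ℕ) : Prop :=
  ∃ t ∈ T, (∀ v ∈ X, t v = s v) ∧ t y' ≠ s y'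

lemma locD_pair (a b : Fin 2 → ℕ) (X : Finset (Fin 2)) (y' : Fin 2) (s : Fin 2 → ℕ) :
    locD {a, b} X y' s ↔
      (((∀ v ∈ X, a v = s v) → a y' = s y') ∧ ((∀ v ∈ X, b v = s v) → b y' = s y')) := by
  constructor
  · intro h
    exact ⟨h a (Or.inl rfl), h b (Or.inr rfl)⟩
  · rintro ⟨h1, h2⟩ t ht hX
    rcases ht with rfl | rfl
    · exact h1 hX
    · exact h2 hX

lemma locU_pair (a b : Fin 2 → ℕ) (X : Finset (Fin 2)) (y' : Fin 2) (s : Fin 2 → ℕ) :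
    locU {a, b} X y' s ↔
      (((∀ v ∈ X, a v = s v) ∧ a y' ≠ s y') ∨ ((∀ v ∈ X, b v = s v) ∧ b y' ≠ s y')) := by
  constructor
  · rintro ⟨t, ht, h1, h2⟩
    rcases ht with rfl | rfl
    · exact Or.inl ⟨h1, h2⟩
    · exact Or.inr ⟨h1, h2⟩
  · rintro (⟨h1, h2⟩ | ⟨h1, h2⟩)
    · exact ⟨a, Or.inl rfl, h1, h2⟩
    · exact ⟨b, Or.inr rfl, h1, h2⟩

/-- Inclusion `T(x) ⊆ T(y)` is not invariant under full LFD⁼-bisimulation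
(atoms D, Υ, =, ≠): a concrete counterexample. -/
theorem inclusion_not_lfdeq_bisimulation_invariant :
    ∃ (T T' : Set (Fin 2 → ℕ)) (Z : (Fin 2 → ℕ) → (Fin 2 → ℕ) → Prop),
      T = {![0,1], ![1,0]} ∧ T' = {![1,2], ![2,0]} ∧
      (Z = fun s s' => (s = ![0,1] ∧ s' = ![1,2]) ∨ (s = ![1,0] ∧ s' = ![2,0])) ∧
      -- Z ⊆ T × T'
      (∀ s s', Z s s' → s ∈ T ∧ s' ∈ T') ∧
      -- agreement on local dependence and anonymity atoms
      (∀ s s', Z s s' → ∀ (X : Finset (Fin 2)) (y' : Fin 2),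
        (locD T X y' s ↔ locD T' X y' s') ∧ (locU T X y' s ↔ locU T' X y' s')) ∧
      -- agreement on equality and inequality atoms
      (∀ s s', Z s s' → ∀ u v : Fin 2, (s u = s v ↔ s' u = s' v)) ∧
      -- forth condition
      (∀ s s', Z s s' → ∀ t ∈ T, ∀ X : Finset (Fin 2), (∀ v ∈ X, t v = s v) →
        ∃ t' ∈ T', Z t t' ∧ ∀ v ∈ X, t' v = s' v) ∧
      -- back condition
      (∀ s s', Z s s' → ∀ t' ∈ T', ∀ X : Finset (Fin 2), (∀ v ∈ X, t' v = s' v) →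
        ∃ t ∈ T, Z t t' ∧ ∀ v ∈ X, t v = s v) ∧
      -- fullness of the bisimulation
      (∀ s ∈ T, ∃ s', Z s s') ∧ (∀ s' ∈ T', ∃ s, Z s s') ∧
      -- first team satisfies T(x) ⊆ T(y), second does not
      ({a | ∃ t ∈ T, t 0 = a} ⊆ {a | ∃ t ∈ T, t 1 = a}) ∧
      ¬ ({a | ∃ t ∈ T', t 0 = a} ⊆ {a | ∃ t ∈ T', t 1 = a}) := by
  refine ⟨_, _, _, rfl, rfl, rfl, ?_, ?_, ?_, ?_, ?_, ?_, ?_, ?_, ?_⟩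
  · rintro s s' (⟨rfl, rfl⟩ | ⟨rfl, rfl⟩) <;>
      exact ⟨by simp, by simp⟩
  · rintro s s' (⟨rfl, rfl⟩ | ⟨rfl, rfl⟩) <;> intro X y' <;>
      rw [locD_pair, locD_pair, locU_pair, locU_pair] <;>
      revert X y' <;> decide
  · rintro s s' (⟨rfl, rfl⟩ | ⟨rfl, rfl⟩) <;> decide
  · rintro s s' (⟨rfl, rfl⟩ | ⟨rfl, rfl⟩) <;> intro t ht X hX <;>
      simp only [Set.mem_insert_iff, Set.mem_singleton_iff] at ht <;>
      rcases ht with rfl | rfl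
    · exact ⟨![1,2], Or.inl rfl, Or.inl ⟨rfl, rfl⟩, fun v hv => by
        have := hX v hv; fin_cases v <;> (try rfl) <;> simp at this⟩
    · exact ⟨![2,0], Or.inr rfl, Or.inr ⟨rfl, rfl⟩, fun v hv => by
        have := hX v hv; fin_cases v <;> (try rfl) <;> simp at this⟩
    · exact ⟨![1,2], Or.inl rfl, Or.inl ⟨rfl, rfl⟩, fun v hv => by
        have := hX v hv; fin_cases v <;> (try rfl) <;> simp at this⟩
    · exact ⟨![2,0], Or.inr rfl, Or.inr ⟨rfl, rfl⟩, fun v hv => by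
        have := hX v hv; fin_cases v <;> (try rfl) <;> simp at this⟩
  · rintro s s' (⟨rfl, rfl⟩ | ⟨rfl, rfl⟩) <;> intro t' ht' X hX <;>
      simp only [Set.mem_insert_iff, Set.mem_singleton_iff] at ht' <;>
      rcases ht' with rfl | rfl
    · exact ⟨![0,1], Or.inl rfl, Or.inl ⟨rfl, rfl⟩, fun v hv => by
        have := hX v hv; fin_cases v <;> (try rfl) <;> simp at this⟩
    · exact ⟨![1,0], Or.inr rfl, Or.inr ⟨rfl, rfl⟩, fun v hv => by
        have := hX v hv; fin_cases v <;> (try rfl) <;> simp at this⟩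
    · exact ⟨![0,1], Or.inl rfl, Or.inl ⟨rfl, rfl⟩, fun v hv => by
        have := hX v hv; fin_cases v <;> (try rfl) <;> simp at this⟩
    · exact ⟨![1,0], Or.inr rfl, Or.inr ⟨rfl, rfl⟩, fun v hv => by
        have := hX v hv; fin_cases v <;> (try rfl) <;> simp at this⟩
  · rintro s hs
    simp only [Set.mem_insert_iff, Set.mem_singleton_iff] at hs
    rcases hs with rfl | rfl
    · exact ⟨![1,2], Or.inl ⟨rfl, rfl⟩⟩
    · exact ⟨![2,0], Or.inr ⟨rfl, rfl⟩⟩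
  · rintro s' hs'
    simp only [Set.mem_insert_iff, Set.mem_singleton_iff] at hs'
    rcases hs' with rfl | rfl
    · exact ⟨![0,1], Or.inl ⟨rfl, rfl⟩⟩
    · exact ⟨![1,0], Or.inr ⟨rfl, rfl⟩⟩
  · rintro a ⟨t, ht, rfl⟩
    simp only [Set.mem_insert_iff, Set.mem_singleton_iff] at ht
    rcases ht with rfl | rfl
    · exact ⟨![1,0], Or.inr rfl, rfl⟩
    · exact ⟨![0,1], Or.inl rfl, rfl⟩
  · intro h
    obtain ⟨t, ht, h1⟩ := h ⟨![1,2], Or.inl rfl, rfl⟩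
    simp only [Set.mem_insert_iff, Set.mem_singleton_iff] at ht
    rcases ht with rfl | rfl <;> simp_all
end
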